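/- arXiv:1511.03852 — 4 statements merged into one kernel-verified Lean document; each statement's English description precedes it below -/
import Mathlib

section
/- Let d ≥ 1 and let v₁, …, v_k ∈ ℤ^d be linearly independent over ℚ. Then for every w ∈ ℤ^d one has the inclusion–exclusion identity Σ_{S ⊆ {1,…,k}} (−1)^{|S|} · 𝟙[ w − Σ_{i∈S} vᵢ ∈ Cone(v) ∩ ℤ^d ] = 𝟙[ w ∈ P_τ ], where 𝟙[·] denotes the indicator (1 if the condition holds, 0 otherwise) and the sum is taken in ℤ. (This is the coefficient-wise form of the generating function identity (Σ_{u ∈ τ∩ℤ^d} χ^u) · ∏ᵢ (1 − χ^{vᵢ}) = Σ_{n ∈ P_τ} χ^n.) -/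
/-- `u ∈ ℤ^d` lies in the simplicial cone spanned by `v₁, …, v_k`, i.e.
`u = Σᵢ λᵢ vᵢ` with all `λᵢ ∈ ℚ`, `λᵢ ≥ 0`. -/
def coneMem (d k : ℕ) (v : Fin k → Fin d → ℤ) (u : Fin d → ℤ) : Prop :=
  ∃ lam : Fin k → ℚ, (∀ i, 0 ≤ lam i) ∧ ∀ j, (u j : ℚ) = ∑ i, lam i * (v i j : ℚ)

/-- `u ∈ ℤ^d` lies in the fundamental half-open parallelotope
`P_τ = {Σᵢ μᵢ vᵢ : 0 ≤ μᵢ < 1}`. -/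
def parMem (d k : ℕ) (v : Fin k → Fin d → ℤ) (u : Fin d → ℤ) : Prop :=
  ∃ mu : Fin k → ℚ, (∀ i, 0 ≤ mu i ∧ mu i < 1) ∧ ∀ j, (u j : ℚ) = ∑ i, mu i * (v i j : ℚ)

/-!
Linear independence makes the coefficients of a vector in the span of the `vᵢ` unique. If `w` is
outside the span, so is every `w - Σ_{i ∈ S} vᵢ`, and both sides vanish. Otherwise write
`w = Σ cᵢ vᵢ`: then `w - Σ_{i ∈ S} vᵢ` lies in the cone iff `cᵢ ≥ 1` for `i ∈ S` and `cᵢ ≥ 0`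
for `i ∉ S`, so the alternating sum factors as `∏ᵢ ([cᵢ ≥ 0] - [cᵢ ≥ 1]) = ∏ᵢ [0 ≤ cᵢ < 1]`.
-/

open Finset

theorem sum_neg_one_pow_card_mul_ite_forall_ite_mem_le {ι α : Type*} [Fintype ι] [DecidableEq ι]
    [Zero α] [One α] [LinearOrder α] [ZeroLEOneClass α] (c : ι → α) :
    ∑ S : Finset ι, (-1 : ℤ) ^ #S * (if ∀ i, (if i ∈ S then 1 else 0) ≤ c i then 1 else 0)
      = if ∀ i, 0 ≤ c i ∧ c i < 1 then 1 else 0 := by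
  have hfactor : ∀ i, (if 0 ≤ c i then 1 else 0 : ℤ) - (if 1 ≤ c i then 1 else 0)
      = if 0 ≤ c i ∧ c i < 1 then 1 else 0 := by
    intro i
    by_cases h1 : 1 ≤ c i
    · simp [h1, zero_le_one.trans h1]
    · simp [h1, not_le.mp h1]
  have hterm : ∀ S : Finset ι,
      (if ∀ i, (if i ∈ S then 1 else 0) ≤ c i then (1 : ℤ) else 0)
        = (∏ i ∈ univ \ S, if 0 ≤ c i then 1 else 0) * ∏ i ∈ S, if 1 ≤ c i then 1 else 0 := by
    intro S
    rw [← Fintype.prod_boole, ← prod_sdiff (subset_univ S)]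
    congr 1
    · exact prod_congr rfl fun i hi => by rw [if_neg (mem_sdiff.mp hi).2]
    · exact prod_congr rfl fun i hi => by rw [if_pos hi]
  rw [← Fintype.prod_boole, ← prod_congr rfl fun i _ => hfactor i, prod_sub, powerset_univ]
  exact sum_congr rfl fun S _ => by rw [hterm, mul_assoc]

section Cone

variable {d k : ℕ} (v : Fin k → Fin d → ℤ)

theorem coeffs_unique (hv : LinearIndependent ℚ (fun i : Fin k => fun j : Fin d => (v i j : ℚ)))
    {u : Fin d → ℤ} {lam mu : Fin k → ℚ}
    (hlam : ∀ j, (u j : ℚ) = ∑ i, lam i * (v i j : ℚ))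
    (hmu : ∀ j, (u j : ℚ) = ∑ i, mu i * (v i j : ℚ)) : lam = mu :=
  funext <| Fintype.linearIndependent_iffₛ.mp hv lam mu <| funext fun j => by
    simp [Finset.sum_apply, ← hlam j, ← hmu j]

theorem exists_coeffs_iff_of_eq
    (hv : LinearIndependent ℚ (fun i : Fin k => fun j : Fin d => (v i j : ℚ)))
    {u : Fin d → ℤ} {c : Fin k → ℚ} (hc : ∀ j, (u j : ℚ) = ∑ i, c i * (v i j : ℚ))
    (P : (Fin k → ℚ) → Prop) :
    (∃ lam, P lam ∧ ∀ j, (u j : ℚ) = ∑ i, lam i * (v i j : ℚ)) ↔ P c :=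
  ⟨fun ⟨_, hP, hlam⟩ => coeffs_unique v hv hlam hc ▸ hP, fun hP => ⟨c, hP, hc⟩⟩

theorem parMem_iff_of_eq
    (hv : LinearIndependent ℚ (fun i : Fin k => fun j : Fin d => (v i j : ℚ)))
    {u : Fin d → ℤ} {c : Fin k → ℚ} (hc : ∀ j, (u j : ℚ) = ∑ i, c i * (v i j : ℚ)) :
    parMem d k v u ↔ ∀ i, 0 ≤ c i ∧ c i < 1 :=
  exists_coeffs_iff_of_eq v hv hc _

theorem sub_sum_eq_iff (w : Fin d → ℤ) (S : Finset (Fin k)) (lam : Fin k → ℚ) :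
    (∀ j, (((w - ∑ i ∈ S, v i) j : ℤ) : ℚ) = ∑ i, lam i * (v i j : ℚ)) ↔
      ∀ j, (w j : ℚ) = ∑ i, (lam i + if i ∈ S then 1 else 0) * (v i j : ℚ) := by
  simp [Finset.sum_apply, add_mul, Finset.sum_add_distrib, sub_eq_iff_eq_add]

theorem coneMem_sub_sum_iff
    (hv : LinearIndependent ℚ (fun i : Fin k => fun j : Fin d => (v i j : ℚ)))
    {w : Fin d → ℤ} {c : Fin k → ℚ} (hc : ∀ j, (w j : ℚ) = ∑ i, c i * (v i j : ℚ))
    (S : Finset (Fin k)) :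
    coneMem d k v (w - ∑ i ∈ S, v i) ↔ ∀ i, (if i ∈ S then 1 else 0) ≤ c i := by
  have hshift : ∀ j, (((w - ∑ i ∈ S, v i) j : ℤ) : ℚ)
      = ∑ i, (c i - if i ∈ S then 1 else 0) * (v i j : ℚ) :=
    (sub_sum_eq_iff v w S _).2 (by simpa using hc)
  simp only [coneMem, exists_coeffs_iff_of_eq v hv hshift, sub_nonneg]

theorem exists_coeffs_of_coneMem_sub_sum {w : Fin d → ℤ} {S : Finset (Fin k)}
    (h : coneMem d k v (w - ∑ i ∈ S, v i)) :
    ∃ c : Fin k → ℚ, ∀ j, (w j : ℚ) = ∑ i, c i * (v i j : ℚ) :=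
  let ⟨_, _, hlam⟩ := h
  ⟨_, (sub_sum_eq_iff v w S _).1 hlam⟩

end Cone

open scoped Classical in
theorem stmt1_general (d k : ℕ)
    (v : Fin k → Fin d → ℤ)
    (hv : LinearIndependent ℚ (fun i : Fin k => fun j : Fin d => (v i j : ℚ))) :
    ∀ w : Fin d → ℤ,
      (∑ S : Finset (Fin k),
          (-1 : ℤ) ^ S.card * (if coneMem d k v (w - ∑ i ∈ S, v i) then 1 else 0))
        = (if parMem d k v w then 1 else 0) := by
  intro w
  by_cases hspan : ∃ c : Fin k → ℚ, ∀ j, (w j : ℚ) = ∑ i, c i * (v i j : ℚ)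
  · obtain ⟨c, hc⟩ := hspan
    simp only [coneMem_sub_sum_iff v hv hc, parMem_iff_of_eq v hv hc]
    -- the two sides differ only in their `Decidable` instances
    convert sum_neg_one_pow_card_mul_ite_forall_ite_mem_le c
  · have hcone : ∀ S : Finset (Fin k), ¬ coneMem d k v (w - ∑ i ∈ S, v i) :=
      fun _ h => hspan (exists_coeffs_of_coneMem_sub_sum v h)
    have hpar : ¬ parMem d k v w := fun ⟨mu, _, hmu⟩ => hspan ⟨mu, hmu⟩
    simp [hcone, hpar]

open scoped Classical in
theorem stmt1 (d k : ℕ) (hd : 1 ≤ d) (hk : k ≤ d)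
    (v : Fin k → Fin d → ℤ)
    (hv : LinearIndependent ℚ (fun i : Fin k => fun j : Fin d => (v i j : ℚ))) :
    ∀ w : Fin d → ℤ,
      (∑ S : Finset (Fin k),
          (-1 : ℤ) ^ S.card * (if coneMem d k v (w - ∑ i ∈ S, v i) then 1 else 0))
        = (if parMem d k v w then 1 else 0) :=
  stmt1_general d k v hv
end

section
/- Let d ≥ 1, let v₁, …, v_k ∈ ℤ^d be linearly independent over ℚ, and let φ : ℤ^d → ℤ be a group homomorphism with φ(vᵢ) > 0 for every i. For each n ∈ ℕ the set {u ∈ Cone(v) ∩ ℤ^d : φ(u) = n} is finite; let c_n denote its cardinality. Then in the ring ℤ[[t]] of formal power series one has (Σ_{n ∈ ℕ} c_n tⁿ) · ∏_{i=1}^{k} (1 − t^{φ(vᵢ)}) = Σ_{p ∈ P_τ} t^{φ(p)}, where the right-hand side is a finite sum over the finitely many lattice points of P_τ and each exponent φ(p) is a natural number. -/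
/-!
Every lattice point of the cone is uniquely `p + Σ mᵢ vᵢ` with `p ∈ P_τ` and `m ∈ ℕ^k`: the
`mᵢ` are the integer parts of the cone coordinates, which are unique by linear independence. As
`φ (p + Σ mᵢ vᵢ) = φ p + Σ mᵢ φ(vᵢ)`, the generating series of the cone factors as
`(Σ_{p ∈ P_τ} t^{φ p}) · ∏ᵢ 1 / (1 - t^{φ vᵢ})`.
-/

open Finset PowerSeries

noncomputable def geomSeries (a : ℕ) : PowerSeries ℤ :=
  mk fun n => if a ∣ n then 1 else 0

theorem one_sub_X_pow_mul_geomSeries {a : ℕ} (ha : 0 < a) :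
    (1 - X ^ a) * geomSeries a = 1 := by
  ext n
  rw [sub_mul, one_mul, map_sub, coeff_X_pow_mul', coeff_one, geomSeries, coeff_mk]
  obtain rfl | hn := n.eq_zero_or_pos
  · simp [ha.ne']
  obtain hlt | rfl | hgt := lt_trichotomy a n
  · simp [hlt.le, hlt.not_ge, hn.ne']
  · simp [ha.ne']
  · simp [hgt.not_ge, hn.ne', Nat.not_dvd_of_pos_of_lt hn hgt]

section Partitions

variable {ι : Type*} [Fintype ι] {a : ι → ℕ}

theorem finite_setOf_add_sum_mul_eq (ha : ∀ i, 0 < a i) (e n : ℕ) :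
    {m : ι → ℕ | e + ∑ i, m i * a i = n}.Finite := by
  classical
  refine (Set.finite_Iic fun _ => n).subset fun m hm i => ?_
  calc m i ≤ m i * a i := Nat.le_mul_of_pos_right _ (ha i)
    _ ≤ ∑ i, m i * a i :=
      single_le_sum (f := fun i => m i * a i) (fun _ _ => Nat.zero_le _) (mem_univ i)
    _ ≤ n := by rw [← hm]; exact Nat.le_add_left _ _

theorem coeff_prod_geomSeries [DecidableEq ι] (ha : ∀ i, 0 < a i) (n : ℕ) :
    coeff n (∏ i, geomSeries (a i)) = Nat.card {m : ι → ℕ // ∑ i, m i * a i = n} := by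
  rw [coeff_prod]
  simp only [geomSeries, coeff_mk, prod_boole, sum_boole, mem_univ, forall_const]
  rw [← Nat.card_eq_finsetCard]
  refine congrArg _ (Nat.card_congr
    { toFun l := ⟨fun i => l.1 i / a i, ?_⟩
      invFun m := ⟨Finsupp.equivFunOnFinite.symm fun i => m.1 i * a i, ?_⟩
      left_inv l := ?_
      right_inv m := ?_ })
  · obtain ⟨⟨hsum, -⟩, hdvd⟩ := by simpa only [mem_filter, mem_finsuppAntidiag] using l.2
    simpa [Nat.div_mul_cancel (hdvd _)] using hsum
  · simpa [mem_finsuppAntidiag] using m.2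
  · ext i
    exact Nat.div_mul_cancel ((mem_filter.mp l.2).2 i)
  · ext i
    exact Nat.mul_div_cancel _ (ha i)

theorem coeff_X_pow_mul_prod_geomSeries (ha : ∀ i, 0 < a i) (e n : ℕ) :
    coeff n (X ^ e * ∏ i, geomSeries (a i)) =
      (Nat.card {m : ι → ℕ // e + ∑ i, m i * a i = n} : ℤ) := by
  classical
  rw [coeff_X_pow_mul']
  split_ifs with he
  · rw [coeff_prod_geomSeries ha]
    exact congrArg _ (Nat.card_congr (Equiv.subtypeEquivRight fun m => by omega))
  · have : IsEmpty {m : ι → ℕ // e + ∑ i, m i * a i = n} := ⟨fun m => he (by omega)⟩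
    simp

end Partitions

theorem AddMonoidHom.cast_apply_eq_sum_of_coords {ι κ : Type*} [Fintype ι] [Fintype κ]
    (φ : (ι → ℤ) →+ ℤ) (w : κ → ι → ℤ) (c : κ → ℚ) {u : ι → ℤ}
    (hu : ∀ j, (u j : ℚ) = ∑ i, c i * w i j) :
    (φ u : ℚ) = ∑ i, c i * φ (w i) := by
  classical
  set e : ι → ℚ := fun j => φ fun j' => if j = j' then 1 else 0
  have hφ (x : ι → ℤ) : (φ x : ℚ) = ∑ j, x j * e j := by
    simpa using congrArg (Int.cast : ℤ → ℚ) (φ.toIntLinearMap.pi_apply_eq_sum_univ x)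
  calc (φ u : ℚ) = ∑ j, ∑ i, c i * (w i j * e j) := by
        simp only [hφ, hu, Finset.sum_mul, mul_assoc]
    _ = ∑ i, c i * φ (w i) := by
        rw [Finset.sum_comm]
        simp only [hφ, Finset.mul_sum]

section Cone

variable {d k : ℕ} (v : Fin k → Fin d → ℤ)

def addNatComb (p : Fin d → ℤ) (m : Fin k → ℕ) : Fin d → ℤ :=
  p + ∑ i, (m i : ℤ) • v i

variable {v}

theorem cast_addNatComb_apply {p : Fin d → ℤ} {μ : Fin k → ℚ}
    (hp : ∀ j, (p j : ℚ) = ∑ i, μ i * v i j) (m : Fin k → ℕ) (j : Fin d) :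
    (addNatComb v p m j : ℚ) = ∑ i, (μ i + m i) * v i j := by
  simp [addNatComb, hp, add_mul, Finset.sum_add_distrib]

theorem coneMem_addNatComb {p : Fin d → ℤ} (hp : parMem d k v p) (m : Fin k → ℕ) :
    coneMem d k v (addNatComb v p m) := by
  obtain ⟨μ, hμ, hp⟩ := hp
  exact ⟨fun i => μ i + m i, fun i => add_nonneg (hμ i).1 (Nat.cast_nonneg _),
    cast_addNatComb_apply hp m⟩

theorem exists_parMem_addNatComb_eq {u : Fin d → ℤ} (hu : coneMem d k v u) :
    ∃ p m, parMem d k v p ∧ addNatComb v p m = u := by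
  obtain ⟨lam, hlam, hu⟩ := hu
  refine ⟨u - ∑ i, (⌊lam i⌋₊ : ℤ) • v i, fun i => ⌊lam i⌋₊, ?_, by simp [addNatComb]⟩
  refine ⟨fun i => lam i - ⌊lam i⌋₊,
    fun i => ⟨sub_nonneg.mpr (Nat.floor_le (hlam i)),
      by linarith [Nat.lt_floor_add_one (lam i)]⟩,
    fun j => ?_⟩
  simp [hu, sub_mul, Finset.sum_apply]

theorem eq_of_sum_mul_eq
    (hv : LinearIndependent ℚ (fun i : Fin k => fun j : Fin d => (v i j : ℚ)))
    {c c' : Fin k → ℚ} (h : ∀ j, ∑ i, c i * v i j = ∑ i, c' i * v i j) : c = c' := by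
  refine funext (Fintype.linearIndependent_iffₛ.mp hv c c' (funext fun j => ?_))
  simpa [Finset.sum_apply] using h j

theorem addNatComb_inj
    (hv : LinearIndependent ℚ (fun i : Fin k => fun j : Fin d => (v i j : ℚ)))
    {p p' : Fin d → ℤ} {m m' : Fin k → ℕ} (hp : parMem d k v p) (hp' : parMem d k v p')
    (h : addNatComb v p m = addNatComb v p' m') : p = p' ∧ m = m' := by
  obtain ⟨μ, hμ, hpμ⟩ := hp
  obtain ⟨μ', hμ', hpμ'⟩ := hp'
  have hcoords : (fun i => μ i + m i) = fun i => μ' i + m' i := eq_of_sum_mul_eq hv fun j => by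
    rw [← cast_addNatComb_apply hpμ, ← cast_addNatComb_apply hpμ', h]
  have hm : m = m' := funext fun i => by
    have := congrArg Nat.floor (congrFun hcoords i)
    simpa [Nat.floor_add_natCast (hμ i).1, Nat.floor_add_natCast (hμ' i).1,
      Nat.floor_eq_zero.mpr (hμ i).2, Nat.floor_eq_zero.mpr (hμ' i).2] using this
  subst hm
  exact ⟨add_right_cancel h, rfl⟩

theorem parMem_finite (v : Fin k → Fin d → ℤ) : {u | parMem d k v u}.Finite := by
  set B : Fin d → ℤ := fun j => ∑ i, |v i j|
  refine (Set.finite_Icc (-B) B).subset ?_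
  rintro u ⟨μ, hμ, hu⟩
  have hbound (j : Fin d) : |u j| ≤ B j := by
    have : |(u j : ℚ)| ≤ ∑ i, |(v i j : ℚ)| := calc
      |(u j : ℚ)| ≤ ∑ i, |μ i * v i j| := hu j ▸ abs_sum_le_sum_abs _ _
      _ ≤ ∑ i, |(v i j : ℚ)| := Finset.sum_le_sum fun i _ => by
        rw [abs_mul, abs_of_nonneg (hμ i).1]
        exact mul_le_of_le_one_left (abs_nonneg _) (hμ i).2.le
    exact_mod_cast this
  exact ⟨fun j => (abs_le.mp (hbound j)).1, fun j => (abs_le.mp (hbound j)).2⟩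

variable (φ : (Fin d → ℤ) →+ ℤ)

theorem map_nonneg_of_parMem (hφ : ∀ i, 0 < φ (v i)) {p : Fin d → ℤ} (hp : parMem d k v p) :
    0 ≤ φ p := by
  obtain ⟨μ, hμ, hp⟩ := hp
  have : (0 : ℚ) ≤ φ p := by
    rw [φ.cast_apply_eq_sum_of_coords _ _ hp]
    exact Finset.sum_nonneg fun i _ => mul_nonneg (hμ i).1 (by exact_mod_cast (hφ i).le)
  exact_mod_cast this

theorem map_addNatComb (p : Fin d → ℤ) (m : Fin k → ℕ) :
    φ (addNatComb v p m) = φ p + ∑ i, m i * φ (v i) := by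
  simp only [addNatComb, map_add, map_sum, map_zsmul, smul_eq_mul]

theorem map_addNatComb_eq_natCast_iff (hφ : ∀ i, 0 < φ (v i)) {p : Fin d → ℤ}
    (hp : parMem d k v p) (m : Fin k → ℕ) (n : ℕ) :
    φ (addNatComb v p m) = n ↔ (φ p).toNat + ∑ i, m i * (φ (v i)).toNat = n := by
  have hp0 := map_nonneg_of_parMem φ hφ hp
  have hsum : ((∑ i, m i * (φ (v i)).toNat : ℕ) : ℤ) = ∑ i, m i * φ (v i) := by
    push_cast
    exact Finset.sum_congr rfl fun i _ => by rw [Int.toNat_of_nonneg (hφ i).le]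
  rw [map_addNatComb]
  omega

variable (v) in
abbrev ConeSliceIndex (n : ℕ) : Type :=
  Σ p : (parMem_finite v).toFinset,
    {m : Fin k → ℕ // (φ p).toNat + ∑ i, m i * (φ (v i)).toNat = n}

theorem coneSlice_eq_range (hφ : ∀ i, 0 < φ (v i)) (n : ℕ) :
    {u | coneMem d k v u ∧ φ u = n} =
      Set.range fun x : ConeSliceIndex v φ n => addNatComb v x.1 x.2 := by
  ext u
  constructor
  · rintro ⟨hu, hφu⟩
    obtain ⟨p, m, hp, rfl⟩ := exists_parMem_addNatComb_eq hu
    exact ⟨⟨⟨p, (parMem_finite v).mem_toFinset.mpr hp⟩, m,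
      (map_addNatComb_eq_natCast_iff φ hφ hp m n).mp hφu⟩, rfl⟩
  · rintro ⟨⟨⟨p, hp⟩, m, hm⟩, rfl⟩
    rw [Set.Finite.mem_toFinset] at hp
    exact ⟨coneMem_addNatComb hp m, (map_addNatComb_eq_natCast_iff φ hφ hp m n).mpr hm⟩

theorem injective_addNatComb_coneSliceIndex
    (hv : LinearIndependent ℚ (fun i : Fin k => fun j : Fin d => (v i j : ℚ))) (n : ℕ) :
    Function.Injective fun x : ConeSliceIndex v φ n => addNatComb v x.1 x.2 := by
  rintro ⟨⟨p, hp⟩, m, hm⟩ ⟨⟨p', hp'⟩, m', hm'⟩ h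
  rw [Set.Finite.mem_toFinset] at hp hp'
  obtain ⟨rfl, rfl⟩ := addNatComb_inj hv hp hp' h
  rfl

theorem finite_coneSliceFiber (hφ : ∀ i, 0 < φ (v i)) (e n : ℕ) :
    Finite {m : Fin k → ℕ // e + ∑ i, m i * (φ (v i)).toNat = n} :=
  (finite_setOf_add_sum_mul_eq (fun i => Int.lt_toNat.mpr (hφ i)) e n).to_subtype

theorem coneSlice_finite (hφ : ∀ i, 0 < φ (v i)) (n : ℕ) :
    {u | coneMem d k v u ∧ φ u = n}.Finite := by
  have := fun p : (parMem_finite v).toFinset => finite_coneSliceFiber φ hφ (φ p).toNat n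
  rw [coneSlice_eq_range φ hφ n]
  exact Set.finite_range _

theorem ncard_coneSlice
    (hv : LinearIndependent ℚ (fun i : Fin k => fun j : Fin d => (v i j : ℚ)))
    (hφ : ∀ i, 0 < φ (v i)) (n : ℕ) :
    {u | coneMem d k v u ∧ φ u = n}.ncard = ∑ p ∈ (parMem_finite v).toFinset,
      Nat.card {m : Fin k → ℕ // (φ p).toNat + ∑ i, m i * (φ (v i)).toNat = n} := by
  have := fun p : (parMem_finite v).toFinset => finite_coneSliceFiber φ hφ (φ p).toNat n
  rw [coneSlice_eq_range φ hφ n,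
    Set.ncard_range_of_injective (injective_addNatComb_coneSliceIndex φ hv n), Nat.card_sigma]
  exact Finset.sum_coe_sort _
    fun p => Nat.card {m : Fin k → ℕ // (φ p).toNat + ∑ i, m i * (φ (v i)).toNat = n}

theorem coneSeries_eq
    (hv : LinearIndependent ℚ (fun i : Fin k => fun j : Fin d => (v i j : ℚ)))
    (hφ : ∀ i, 0 < φ (v i)) :
    (mk fun n : ℕ => ({u | coneMem d k v u ∧ φ u = n}.ncard : ℤ)) =
      (∑ p ∈ (parMem_finite v).toFinset, X ^ (φ p).toNat) *
        ∏ i, geomSeries (φ (v i)).toNat := by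
  ext n
  rw [coeff_mk, ncard_coneSlice φ hv hφ n, Finset.sum_mul, map_sum, Nat.cast_sum]
  exact Finset.sum_congr rfl fun p _ =>
    (coeff_X_pow_mul_prod_geomSeries (fun i => Int.lt_toNat.mpr (hφ i)) _ n).symm

end Cone

theorem stmt2_general (d k : ℕ)
    (v : Fin k → Fin d → ℤ)
    (hv : LinearIndependent ℚ (fun i : Fin k => fun j : Fin d => (v i j : ℚ)))
    (φ : (Fin d → ℤ) →+ ℤ) (hφ : ∀ i, 0 < φ (v i)) :
    (∀ n : ℕ, {u : Fin d → ℤ | coneMem d k v u ∧ φ u = (n : ℤ)}.Finite) ∧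
    (∀ p : Fin d → ℤ, parMem d k v p → 0 ≤ φ p) ∧
    (PowerSeries.mk fun n : ℕ =>
        (({u : Fin d → ℤ | coneMem d k v u ∧ φ u = (n : ℤ)}.ncard : ℤ)))
      * ∏ i : Fin k, (1 - (PowerSeries.X : PowerSeries ℤ) ^ (φ (v i)).toNat)
      = ∑ᶠ p ∈ {u : Fin d → ℤ | parMem d k v u},
          (PowerSeries.X : PowerSeries ℤ) ^ (φ p).toNat := by
  refine ⟨coneSlice_finite φ hφ, fun p => map_nonneg_of_parMem φ hφ, ?_⟩
  have hinv : (∏ i, geomSeries (φ (v i)).toNat) * ∏ i, (1 - X ^ (φ (v i)).toNat) = 1 := by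
    rw [← Finset.prod_mul_distrib]
    exact Finset.prod_eq_one fun i _ => by
      rw [mul_comm, one_sub_X_pow_mul_geomSeries (Int.lt_toNat.mpr (hφ i))]
  rw [coneSeries_eq φ hv hφ, mul_assoc, hinv, mul_one,
    finsum_mem_eq_finite_toFinset_sum _ (parMem_finite v)]

theorem stmt2 (d k : ℕ) (hd : 1 ≤ d) (hk : k ≤ d)
    (v : Fin k → Fin d → ℤ)
    (hv : LinearIndependent ℚ (fun i : Fin k => fun j : Fin d => (v i j : ℚ)))
    (φ : (Fin d → ℤ) →+ ℤ) (hφ : ∀ i, 0 < φ (v i)) :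
    (∀ n : ℕ, {u : Fin d → ℤ | coneMem d k v u ∧ φ u = (n : ℤ)}.Finite) ∧
    (∀ p : Fin d → ℤ, parMem d k v p → 0 ≤ φ p) ∧
    (PowerSeries.mk fun n : ℕ =>
        (({u : Fin d → ℤ | coneMem d k v u ∧ φ u = (n : ℤ)}.ncard : ℤ)))
      * ∏ i : Fin k, (1 - (PowerSeries.X : PowerSeries ℤ) ^ (φ (v i)).toNat)
      = ∑ᶠ p ∈ {u : Fin d → ℤ | parMem d k v u},
          (PowerSeries.X : PowerSeries ℤ) ^ (φ p).toNat :=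
  stmt2_general d k v hv φ hφ
end

section
/- Let E be a finite-dimensional real vector space, let C ⊆ E be a closed convex cone, let Q ⊆ E be the convex hull of a nonempty finite set (a polytope), and set P := Q + C (Minkowski sum). Assume P ⊆ C and 0 ∉ P. Let ρ ∈ E with ρ ≠ 0 be such that the ray R := {λ • ρ : λ ∈ ℝ, λ ≥ 0} is an exposed face of C and P ∩ R ≠ ∅. Then there exist a real number λ > 0 and an extreme point v of P such that ρ = λ • v. -/
open scoped Pointwise
open Set

/-!
The functional `ℓ` exposing the ray `R` in `C` also exposes `P ∩ R` in `P`, because `P ⊆ C` meets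
`R`; so extreme points of `P ∩ R` are extreme points of `P`. The set `P ∩ R` is closed (`P` is a
compact set plus a closed one), so it has a point `λ • ρ` of least scale, which is extreme in
`P ∩ R`, and `λ > 0` because `0 ∉ P`.
-/

theorem IsLeast.mem_extremePoints {𝕜 : Type*} [CommRing 𝕜] [LinearOrder 𝕜] [IsStrictOrderedRing 𝕜]
    {S : Set 𝕜} {a : 𝕜} (h : IsLeast S a) : a ∈ S.extremePoints 𝕜 := by
  refine ⟨h.1, fun x₁ hx₁ x₂ hx₂ ⟨α, β, hα, hβ, hαβ, hx⟩ => ?_⟩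
  have h₁ := h.2 hx₁
  have h₂ := h.2 hx₂
  simp only [smul_eq_mul] at hx
  have hsum : α * (x₁ - a) + β * (x₂ - a) = 0 := by linear_combination hx - a * hαβ
  nlinarith [mul_nonneg hα.le (sub_nonneg.2 h₁), mul_nonneg hβ.le (sub_nonneg.2 h₂)]

theorem LinearMap.image_mem_extremePoints_image {𝕜 E F : Type*} [Ring 𝕜] [PartialOrder 𝕜]
    [IsOrderedRing 𝕜] [AddCommGroup E] [Module 𝕜 E] [AddCommGroup F] [Module 𝕜 F] {f : E →ₗ[𝕜] F}
    (hf : Function.Injective f) {s : Set E} {x : E} (hx : x ∈ s.extremePoints 𝕜) :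
    f x ∈ (f '' s).extremePoints 𝕜 := by
  refine ⟨mem_image_of_mem f hx.1, ?_⟩
  rintro _ ⟨y₁, hy₁, rfl⟩ _ ⟨y₂, hy₂, rfl⟩ hseg
  rw [← f.coe_toAffineMap, ← image_openSegment] at hseg
  obtain ⟨z, hz, hzx⟩ := hseg
  rw [hx.2 hy₁ hy₂ (hf hzx ▸ hz)]

theorem IsExposed.inter_of_subset {𝕜 E : Type*} [TopologicalSpace 𝕜] [Ring 𝕜] [PartialOrder 𝕜]
    [AddCommMonoid E] [TopologicalSpace E] [Module 𝕜 E] {A B C : Set E}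
    (hB : IsExposed 𝕜 C B) (hAC : A ⊆ C) (hAB : (A ∩ B).Nonempty) : IsExposed 𝕜 A (A ∩ B) := by
  obtain ⟨z, hzA, hzB⟩ := hAB
  obtain ⟨ℓ, rfl⟩ := hB ⟨z, hzB⟩
  refine fun _ => ⟨ℓ, Subset.antisymm
    (fun x ⟨hxA, _, hx⟩ => ⟨hxA, fun y hy => hx y (hAC hy)⟩)
    (fun x ⟨hxA, hx⟩ => ⟨hxA, hAC hxA, fun y hy => (hzB.2 y hy).trans (hx z hzA)⟩)⟩

theorem exists_smul_mem_extremePoints_of_subset_ray {E : Type*} [AddCommGroup E] [Module ℝ E]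
    [TopologicalSpace E] [ContinuousSMul ℝ E] {T : Set E} {ρ : E} (hρ : ρ ≠ 0)
    (hT : IsClosed T) (hTne : T.Nonempty) (hTρ : T ⊆ {x : E | ∃ l : ℝ, 0 ≤ l ∧ x = l • ρ}) :
    ∃ l : ℝ, 0 ≤ l ∧ l • ρ ∈ T.extremePoints ℝ := by
  let f : ℝ →ₗ[ℝ] E := LinearMap.toSpanSingleton ℝ E ρ
  let S : Set ℝ := Ici 0 ∩ f ⁻¹' T
  have hfS : f '' S = T := by
    refine Subset.antisymm (image_subset_iff.2 inter_subset_right) fun x hx => ?_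
    obtain ⟨l, hl, rfl⟩ := hTρ hx
    exact ⟨l, ⟨hl, hx⟩, rfl⟩
  have hSne : S.Nonempty := by
    obtain ⟨x, hx⟩ := hTne
    obtain ⟨l, hl, rfl⟩ := hTρ hx
    exact ⟨l, hl, hx⟩
  have hSclosed : IsClosed S :=
    isClosed_Ici.inter (hT.preimage (continuous_id.smul continuous_const))
  have hleast : IsLeast S (sInf S) := hSclosed.isLeast_csInf hSne ⟨0, fun _ hl => hl.1⟩
  refine ⟨sInf S, hleast.1.1, ?_⟩
  rw [← hfS]
  exact LinearMap.image_mem_extremePoints_image (smul_left_injective ℝ hρ)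
    hleast.mem_extremePoints

theorem stmt7_general (E : Type*) [AddCommGroup E] [Module ℝ E]
    [TopologicalSpace E] [IsTopologicalAddGroup E] [ContinuousSMul ℝ E]
    (C : Set E) (hCclosed : IsClosed C)
    (s : Set E) (hsfin : s.Finite)
    (P : Set E) (hP : P = convexHull ℝ s + C)
    (hPC : P ⊆ C) (h0 : (0 : E) ∉ P)
    (ρ : E) (hρ : ρ ≠ 0)
    (R : Set E) (hR : R = {x : E | ∃ l : ℝ, 0 ≤ l ∧ x = l • ρ})
    (hexp : ∃ ℓ : E →L[ℝ] ℝ, R = {x ∈ C | ∀ y ∈ C, ℓ y ≤ ℓ x})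
    (hPR : (P ∩ R).Nonempty) :
    ∃ lam : ℝ, 0 < lam ∧ ∃ v ∈ P.extremePoints ℝ, ρ = lam • v := by
  have hface : IsExposed ℝ P (P ∩ R) :=
    IsExposed.inter_of_subset (fun _ => hexp) hPC hPR
  have hPclosed : IsClosed P :=
    hP ▸ hCclosed.add_left_of_isCompact (hsfin.isCompact_convexHull (𝕜 := ℝ))
  obtain ⟨l, hl0, hl⟩ := exists_smul_mem_extremePoints_of_subset_ray hρ
    (hface.isClosed hPclosed) hPR (hR ▸ inter_subset_right)
  have hlpos : 0 < l := hl0.lt_of_ne <| by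
    rintro rfl
    exact h0 (by simpa using hl.1.1)
  refine ⟨l⁻¹, inv_pos.2 hlpos, l • ρ, hface.isExtreme.extremePoints_subset_extremePoints hl, ?_⟩
  rw [smul_smul, inv_mul_cancel₀ hlpos.ne', one_smul]

theorem stmt7 (E : Type*) [AddCommGroup E] [Module ℝ E]
    [TopologicalSpace E] [IsTopologicalAddGroup E] [ContinuousSMul ℝ E]
    [FiniteDimensional ℝ E]
    (C : Set E) (hCclosed : IsClosed C) (hCconv : Convex ℝ C)
    (hCcone : ∀ x ∈ C, ∀ r : ℝ, 0 ≤ r → r • x ∈ C)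
    (s : Set E) (hsfin : s.Finite) (hsne : s.Nonempty)
    (P : Set E) (hP : P = convexHull ℝ s + C)
    (hPC : P ⊆ C) (h0 : (0 : E) ∉ P)
    (ρ : E) (hρ : ρ ≠ 0)
    (R : Set E) (hR : R = {x : E | ∃ l : ℝ, 0 ≤ l ∧ x = l • ρ})
    (hexp : ∃ ℓ : E →L[ℝ] ℝ, R = {x ∈ C | ∀ y ∈ C, ℓ y ≤ ℓ x})
    (hPR : (P ∩ R).Nonempty) :
    ∃ lam : ℝ, 0 < lam ∧ ∃ v ∈ P.extremePoints ℝ, ρ = lam • v :=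
  stmt7_general E C hCclosed s hsfin P hP hPC h0 ρ hρ R hR hexp hPR
end

section
/- For each n ∈ ℕ, the set {(a, b, c) ∈ ℤ³ : c ≥ 1, b ≥ 0, 6a − b + 3c ≥ 0, 5a + 3c = n} is finite; let c_n denote its cardinality. Then in the formal power series ring ℤ[[t]] one has (Σ_{n ∈ ℕ} c_n tⁿ) · (1 − t)(1 − t⁵)² = t + 4t³ + 5t⁶ + 2t⁸. -/
/-!
The shift `(a, b, c) ↦ (a - 1, b, c + 2)` along the ray `(-1, 0, 2)` of the cone raises the weight
`5a + 3c` by one and maps the weight-`n` slice bijectively onto the points of the weight-`(n + 1)`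
slice with `c ≥ 3`. Hence multiplying the generating series by `1 - t` leaves the series counting
the points with `c ∈ {1, 2}`: these lie on one segment `{a} × [0, 6a + 3c] × {c}` whose length
grows by `6` each time the weight grows by `5`, so two further factors `1 - t⁵` leave a polynomial.
-/

open PowerSeries

theorem PowerSeries.mk_mul_one_sub_X_pow {R : Type*} [Ring R] (f : ℕ → R) (k : ℕ) :
    mk f * (1 - X ^ k) = mk fun n => f n - if k ≤ n then f (n - k) else 0 := by
  ext n
  simp [mul_sub, coeff_mul_X_pow']

def cayleySlice (n : ℤ) : Set (ℤ × ℤ × ℤ) :=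
  {p | 1 ≤ p.2.2 ∧ 0 ≤ p.2.1 ∧ 0 ≤ 6 * p.1 - p.2.1 + 3 * p.2.2 ∧ 5 * p.1 + 3 * p.2.2 = n}

theorem cayleySlice_finite (n : ℤ) : (cayleySlice n).Finite :=
  (Set.finite_Icc (-n, 0, 1) (n, 12 * n, 2 * n)).subset fun ⟨a, b, c⟩ ⟨h1, h2, h3, h4⟩ => by
    simp only [Set.mem_Icc, Prod.mk_le_mk] at *
    omega

theorem cayleySlice_of_nonpos {n : ℤ} (hn : n ≤ 0) : cayleySlice n = ∅ :=
  Set.eq_empty_of_forall_notMem fun p ⟨h1, _, h3, h4⟩ => by omega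

def cayleyShift (p : ℤ × ℤ × ℤ) : ℤ × ℤ × ℤ := (p.1 - 1, p.2.1, p.2.2 + 2)

theorem cayleyShift_injective : Function.Injective cayleyShift := by
  rintro ⟨a, b, c⟩ ⟨a', b', c'⟩ h
  simp only [cayleyShift, Prod.mk.injEq] at h
  simp only [Prod.mk.injEq]
  omega

theorem image_cayleyShift_cayleySlice (n : ℤ) :
    cayleyShift '' cayleySlice n = cayleySlice (n + 1) ∩ {p | 3 ≤ p.2.2} := by
  ext ⟨a, b, c⟩
  simp only [cayleySlice, cayleyShift, Set.mem_image, Set.mem_inter_iff, Set.mem_ofPred_eq,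
    Prod.exists, Prod.mk.injEq]
  constructor
  · rintro ⟨a, b, c, ⟨h1, h2, h3, h4⟩, rfl, rfl, rfl⟩
    omega
  · rintro ⟨⟨h1, h2, h3, h4⟩, h5⟩
    exact ⟨a + 1, b, c - 2, by omega⟩

theorem ncard_cayleySlice_succ (n : ℤ) :
    (cayleySlice (n + 1)).ncard =
      (cayleySlice n).ncard + (cayleySlice (n + 1) \ {p | 3 ≤ p.2.2}).ncard := by
  rw [← Set.ncard_inter_add_ncard_sdiff_eq_ncard _ _ (cayleySlice_finite _),
    ← image_cayleyShift_cayleySlice, Set.ncard_image_of_injective _ cayleyShift_injective]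

theorem ncard_segment (a c : ℤ) (k : ℕ) :
    {p : ℤ × ℤ × ℤ | p.1 = a ∧ p.2.2 = c ∧ 0 ≤ p.2.1 ∧ p.2.1 ≤ k}.ncard = k + 1 := by
  have : {p : ℤ × ℤ × ℤ | p.1 = a ∧ p.2.2 = c ∧ 0 ≤ p.2.1 ∧ p.2.1 ≤ k} =
      (fun b : ℕ => (a, (b : ℤ), c)) '' Set.Iic k := by
    ext ⟨a', b, c'⟩
    simp only [Set.mem_ofPred_eq, Set.mem_image, Set.mem_Iic, Prod.mk.injEq]
    constructor
    · rintro ⟨rfl, rfl, h0, hk⟩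
      exact ⟨b.toNat, by omega, rfl, by omega, rfl⟩
    · rintro ⟨b, hb, rfl, rfl, rfl⟩
      exact ⟨rfl, rfl, by omega, by exact_mod_cast hb⟩
  rw [this, Set.ncard_image_of_injective _ (fun x y h => by simpa using h)]
  simp

-- On the layer `c ∈ {1, 2}` of the weight-`n` slice, `3c ≡ n (mod 5)` forces `c = 2` when `n ≡ 1`
-- and `c = 1` when `n ≡ 3`; the layer is then the segment `0 ≤ b ≤ 6a + 3c`, and empty otherwise.
def cayleyLowLayerCount (n : ℕ) : ℕ :=
  if n % 5 = 1 then 6 * (n / 5) + 1 else if n % 5 = 3 then 6 * (n / 5) + 4 else 0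

theorem ncard_cayleySlice_sdiff (n : ℕ) :
    (cayleySlice n \ {p | 3 ≤ p.2.2}).ncard = cayleyLowLayerCount n := by
  unfold cayleyLowLayerCount
  split_ifs
  · convert ncard_segment ((n / 5 : ℕ) - 1 : ℤ) 2 (6 * (n / 5)) using 2
    ext ⟨a, b, c⟩
    simp only [cayleySlice, Set.mem_sdiff, Set.mem_ofPred_eq]
    omega
  · convert ncard_segment (n / 5 : ℕ) 1 (6 * (n / 5) + 3) using 2
    ext ⟨a, b, c⟩
    simp only [cayleySlice, Set.mem_sdiff, Set.mem_ofPred_eq]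
    omega
  · convert Set.ncard_empty (ℤ × ℤ × ℤ)
    ext ⟨a, b, c⟩
    simp only [cayleySlice, Set.mem_sdiff, Set.mem_ofPred_eq, Set.mem_empty_iff_false, iff_false]
    omega

theorem mk_ncard_cayleySlice_mul_one_sub_X :
    mk (fun n : ℕ => ((cayleySlice n).ncard : ℤ)) * (1 - X) =
      mk fun n => (cayleyLowLayerCount n : ℤ) := by
  rw [← pow_one X, mk_mul_one_sub_X_pow]
  ext (_ | n)
  · simp [cayleySlice_of_nonpos, cayleyLowLayerCount]
  · simp only [coeff_mk, le_add_iff_nonneg_left, zero_le, if_true, add_tsub_cancel_right]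
    rw [← ncard_cayleySlice_sdiff, Nat.cast_succ, ncard_cayleySlice_succ]
    push_cast
    ring

theorem mk_cayleyLowLayerCount_mul_one_sub_X_pow_five_sq :
    mk (fun n => (cayleyLowLayerCount n : ℤ)) * (1 - X ^ 5) ^ 2 =
      X + 4 * X ^ 3 + 5 * X ^ 6 + 2 * X ^ 8 := by
  rw [sq, ← mul_assoc, mk_mul_one_sub_X_pow, mk_mul_one_sub_X_pow,
    show (4 : ℤ⟦X⟧) = C 4 from (map_ofNat C 4).symm,
    show (5 : ℤ⟦X⟧) = C 5 from (map_ofNat C 5).symm,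
    show (2 : ℤ⟦X⟧) = C 2 from (map_ofNat C 2).symm]
  ext n
  simp only [coeff_mk, cayleyLowLayerCount, map_add, coeff_X, coeff_C_mul_X_pow]
  push_cast
  split_ifs <;> omega

theorem stmt12 :
    (∀ n : ℕ, {p : ℤ × ℤ × ℤ | 1 ≤ p.2.2 ∧ 0 ≤ p.2.1 ∧
        0 ≤ 6 * p.1 - p.2.1 + 3 * p.2.2 ∧ 5 * p.1 + 3 * p.2.2 = (n : ℤ)}.Finite) ∧
    (PowerSeries.mk fun n : ℕ =>
        (({p : ℤ × ℤ × ℤ | 1 ≤ p.2.2 ∧ 0 ≤ p.2.1 ∧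
            0 ≤ 6 * p.1 - p.2.1 + 3 * p.2.2 ∧
            5 * p.1 + 3 * p.2.2 = (n : ℤ)}.ncard : ℤ)))
      * ((1 - (PowerSeries.X : PowerSeries ℤ))
          * (1 - (PowerSeries.X : PowerSeries ℤ) ^ 5) ^ 2)
      = (PowerSeries.X : PowerSeries ℤ) + 4 * (PowerSeries.X : PowerSeries ℤ) ^ 3
        + 5 * (PowerSeries.X : PowerSeries ℤ) ^ 6
        + 2 * (PowerSeries.X : PowerSeries ℤ) ^ 8 := by
  refine ⟨fun n => cayleySlice_finite n, ?_⟩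
  rw [← mul_assoc]
  exact (congrArg (· * (1 - X ^ 5) ^ 2) mk_ncard_cayleySlice_mul_one_sub_X).trans
    mk_cayleyLowLayerCount_mul_one_sub_X_pow_five_sq
end
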